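/- Let W_n (n ≥ 6) be the wheel graph with outer cycle v_1,…,v_{n−1} and universal vertex v_n. A set A ⊆ V is a center set of W_n if and only if A is one of: {v_i} for 1 ≤ i ≤ n; {v_i, v_n} for 1 ≤ i ≤ n−1; {v_i, v_j, v_n} where v_i v_j is an edge of the outer cycle; or {v_i, v_j, v_k, v_n} where v_i v_j and v_j v_k are edges of the outer cycle. -/

import Mathlib

/-- The `S`-eccentricity of a vertex `v`. -/
noncomputable def sEcc {V : Type*} (G : SimpleGraph V) (S : Finset V) (v : V) : ℕ :=
  S.sup fun x => G.dist v x

/-- The `S`-center of `G`. -/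
noncomputable def sCenter {V : Type*} (G : SimpleGraph V) (S : Finset V) : Set V :=
  {v | ∀ w, sEcc G S v ≤ sEcc G S w}

/-- `A` is a center set of `G` if it is the `S`-center for some nonempty set `S`. -/
def IsCenterSet {V : Type*} (G : SimpleGraph V) (A : Set V) : Prop :=
  ∃ S : Finset V, S.Nonempty ∧ sCenter G S = A

/-- The wheel graph with outer cycle `C_m` on the vertices `some i`, `i : Fin m`, and
universal (hub) vertex `none`. -/
def wheelGraph (m : ℕ) : SimpleGraph (Option (Fin m)) where
  Adj a b :=
    match a, b with
    | none, none => False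
    | none, some _ => True
    | some _, none => True
    | some i, some j => (SimpleGraph.cycleGraph m).Adj i j
  symm := by
    constructor
    rintro (_ | a) (_ | b) h <;> simp_all
    exact h.symm
  loopless := by
    constructor
    rintro (_ | a) h <;> simp_all

/-! If `S` has two distinct vertices, every vertex is at distance at least `1` from one of them,
while the hub is within distance `1` of all of `S`; so the `S`-center is the hub together with the
rim vertices equal or adjacent to every rim vertex of `S`. On a cycle of length at least `5`, such
a common closed neighbourhood of a nonempty set lies in the closed neighbourhood `{a, j, c}` of any
of its members `j`, and contains `j` as soon as it contains both neighbours `a`, `c` of `j`, since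
`j` is their only common neighbour. What is left are exactly the listed shapes, realised by
`S = {x}`, `{v_{i-1}, v_{i+1}}`, `{v_i, v_j}` and `{v_j, v_n}`. -/

open Finset SimpleGraph

theorem Set.subset_triple_cases {α : Type*} {B : Set α} {a b c : α} (hB : B ⊆ {a, b, c})
    (hac : a ∈ B → c ∈ B → b ∈ B) :
    B = ∅ ∨ B = {a} ∨ B = {b} ∨ B = {c} ∨ B = {a, b} ∨ B = {b, c} ∨ B = {a, b, c} := by
  have eq_of_mem_iff (T : Set α)
      (hT : ∀ x, x ∈ T ↔ x = a ∧ a ∈ B ∨ x = b ∧ b ∈ B ∨ x = c ∧ c ∈ B) : B = T := by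
    ext x
    rw [hT]
    constructor
    · intro hx
      rcases hB hx with rfl | rfl | rfl <;> simp [hx]
    · rintro (⟨rfl, h⟩ | ⟨rfl, h⟩ | ⟨rfl, h⟩) <;> exact h
  by_cases ha : a ∈ B <;> by_cases hb : b ∈ B <;> by_cases hc : c ∈ B
  · exact .inr <| .inr <| .inr <| .inr <| .inr <| .inr <|
      eq_of_mem_iff _ (by simp [ha, hb, hc])
  · exact .inr <| .inr <| .inr <| .inr <| .inl <| eq_of_mem_iff _ (by simp [ha, hb, hc])
  · exact absurd (hac ha hc) hb
  · exact .inr <| .inl <| eq_of_mem_iff _ (by simp [ha, hb, hc])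
  · exact .inr <| .inr <| .inr <| .inr <| .inr <| .inl <|
      eq_of_mem_iff _ (by simp [ha, hb, hc])
  · exact .inr <| .inr <| .inl <| eq_of_mem_iff _ (by simp [ha, hb, hc])
  · exact .inr <| .inr <| .inr <| .inl <| eq_of_mem_iff _ (by simp [ha, hb, hc])
  · exact .inl <| eq_of_mem_iff _ (by simp [ha, hb, hc])

theorem Set.Nontrivial.preimage_some_nonempty {α : Type*} {s : Set (Option α)}
    (hs : s.Nontrivial) : (some ⁻¹' s).Nonempty := by
  obtain ⟨x, hx, y, hy, hxy⟩ := hs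
  cases x with
  | some a => exact ⟨a, hx⟩
  | none =>
    cases y with
    | some b => exact ⟨b, hy⟩
    | none => exact absurd rfl hxy

namespace SimpleGraph

section General

variable {V : Type*} (G : SimpleGraph V)

def commonClosedNeighbors (T : Set V) : Set V :=
  {v | ∀ x ∈ T, v = x ∨ G.Adj v x}

variable {G}

theorem mem_commonClosedNeighbors {T : Set V} {v : V} :
    v ∈ G.commonClosedNeighbors T ↔ ∀ x ∈ T, v = x ∨ G.Adj v x := Iff.rfl

theorem commonClosedNeighbors_anti {T₁ T₂ : Set V} (h : T₁ ⊆ T₂) :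
    G.commonClosedNeighbors T₂ ⊆ G.commonClosedNeighbors T₁ :=
  fun _ hv x hx => hv x (h hx)

theorem commonClosedNeighbors_singleton (x : V) :
    G.commonClosedNeighbors {x} = insert x (G.neighborSet x) := by
  ext v
  simp [mem_commonClosedNeighbors, G.adj_comm]

theorem connected_of_forall_adj {u : V} (hu : ∀ v, v ≠ u → G.Adj u v) : G.Connected := by
  have reach (v : V) : G.Reachable u v := by
    rcases eq_or_ne v u with rfl | hv
    · rfl
    · exact (hu v hv).reachable
  have : Nonempty V := ⟨u⟩
  exact ⟨fun v w => (reach v).symm.trans (reach w)⟩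

theorem Reachable.dist_le_one_iff {u v : V} (h : G.Reachable u v) :
    G.dist u v ≤ 1 ↔ u = v ∨ G.Adj u v := by
  rw [Nat.le_one_iff_eq_zero_or_eq_one, h.dist_eq_zero_iff, dist_eq_one_iff_adj]

theorem sCenter_singleton (hG : G.Connected) (x : V) : sCenter G {x} = {x} := by
  ext v
  simp only [sCenter, sEcc, Finset.sup_singleton, Set.mem_ofPred_eq, Set.mem_singleton_iff]
  refine ⟨fun h => ?_, fun h w => by simp [h]⟩
  simpa [hG.dist_eq_zero_iff] using h x

theorem sCenter_eq_commonClosedNeighbors {u : V} (hu : ∀ v, v ≠ u → G.Adj u v)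
    {S : Finset V} (hS : 1 < #S) : sCenter G S = G.commonClosedNeighbors S := by
  have hG := connected_of_forall_adj hu
  have ecc_le_one (v : V) : sEcc G S v ≤ 1 ↔ v ∈ G.commonClosedNeighbors S := by
    simp [sEcc, (hG v _).dist_le_one_iff, mem_commonClosedNeighbors]
  have one_le_ecc (v : V) : 1 ≤ sEcc G S v := by
    obtain ⟨x, hx, y, hy, hxy⟩ := Finset.one_lt_card.mp hS
    obtain ⟨z, hz, hvz⟩ : ∃ z ∈ S, v ≠ z := by
      by_cases hvx : v = x
      · exact ⟨y, hy, hvx ▸ hxy⟩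
      · exact ⟨x, hx, hvx⟩
    exact (hG.pos_dist_of_ne hvz).trans_le (Finset.le_sup (f := G.dist v) hz)
  have ecc_u : sEcc G S u ≤ 1 := by
    rw [ecc_le_one]
    intro x _
    rcases eq_or_ne x u with rfl | hx
    · exact Or.inl rfl
    · exact Or.inr (hu x hx)
  ext v
  rw [← ecc_le_one]
  exact ⟨fun h => (h u).trans ecc_u, fun h w => h.trans (one_le_ecc w)⟩

end General

section Cycle

variable {m : ℕ}

/-- Adjacency in `C_m` in the form `omega` can use. -/
theorem Adj.cycleGraph_val {u v : Fin m} (h : (cycleGraph m).Adj u v) :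
    u.val + 1 = v.val ∨ v.val + 1 = u.val ∨
      u.val + 1 = v.val + m ∨ v.val + 1 = u.val + m := by
  rw [cycleGraph_adj'] at h
  rcases lt_trichotomy u v with huv | rfl | huv
  · rw [Fin.coe_sub_iff_lt.mpr huv, Fin.coe_sub_iff_le.mpr huv.le] at h
    omega
  · rw [Fin.coe_sub_iff_le.mpr le_rfl] at h
    omega
  · rw [Fin.coe_sub_iff_lt.mpr huv, Fin.coe_sub_iff_le.mpr huv.le] at h
    omega

theorem cycleGraph_exists_adj_adj_ne (hm : 3 ≤ m) (j : Fin m) :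
    ∃ a c, (cycleGraph m).Adj j a ∧ (cycleGraph m).Adj j c ∧ a ≠ c := by
  obtain ⟨n, rfl⟩ : ∃ n, m = n + 3 := ⟨m - 3, by omega⟩
  obtain ⟨a, c, hac, hN⟩ := Finset.card_eq_two.mp
    ((card_neighborFinset_eq_degree _ j).trans cycleGraph_degree_three_le)
  refine ⟨a, c, ?_, ?_, hac⟩ <;> rw [← mem_neighborFinset, hN] <;> simp

theorem cycleGraph_neighborSet_eq_pair {j a c : Fin m}
    (ha : (cycleGraph m).Adj j a) (hc : (cycleGraph m).Adj j c) (hac : a ≠ c) :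
    (cycleGraph m).neighborSet j = {a, c} := by
  ext x
  simp only [mem_neighborSet, Set.mem_insert_iff, Set.mem_singleton_iff]
  refine ⟨fun hx => ?_, by rintro (rfl | rfl) <;> assumption⟩
  have := ha.cycleGraph_val
  have := hc.cycleGraph_val
  have := hx.cycleGraph_val
  rw [Ne, Fin.ext_iff] at hac
  simp only [Fin.ext_iff]
  omega

theorem commonClosedNeighbors_cycleGraph_pair_of_adj (hm : 4 ≤ m) {i j : Fin m}
    (h : (cycleGraph m).Adj i j) : (cycleGraph m).commonClosedNeighbors {i, j} = {i, j} := by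
  ext x
  simp only [mem_commonClosedNeighbors, Set.mem_insert_iff, Set.mem_singleton_iff,
    forall_eq_or_imp, forall_eq]
  refine ⟨fun ⟨hi, hj⟩ => ?_, ?_⟩
  · rcases hi with hi | hi
    · exact Or.inl hi
    rcases hj with hj | hj
    · exact Or.inr hj
    have := h.cycleGraph_val
    have := hi.cycleGraph_val
    have := hj.cycleGraph_val
    simp only [Fin.ext_iff]
    omega
  · rintro (rfl | rfl)
    · exact ⟨Or.inl rfl, Or.inr h⟩
    · exact ⟨Or.inr h.symm, Or.inl rfl⟩

theorem commonClosedNeighbors_cycleGraph_pair_of_adj_of_adj (hm : 5 ≤ m) {j a c : Fin m}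
    (ha : (cycleGraph m).Adj j a) (hc : (cycleGraph m).Adj j c) (hac : a ≠ c) :
    (cycleGraph m).commonClosedNeighbors {a, c} = {j} := by
  ext x
  simp only [mem_commonClosedNeighbors, Set.mem_insert_iff, Set.mem_singleton_iff,
    forall_eq_or_imp, forall_eq]
  refine ⟨fun ⟨hxa, hxc⟩ => ?_, ?_⟩
  · have := ha.cycleGraph_val
    have := hc.cycleGraph_val
    rw [Ne, Fin.ext_iff] at hac
    rw [Fin.ext_iff]
    rcases hxa with rfl | hxa <;> rcases hxc with hxc | hxc
    · exact absurd (congrArg Fin.val hxc) hac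
    · have := hxc.cycleGraph_val
      omega
    · subst hxc
      have := hxa.cycleGraph_val
      omega
    · have := hxa.cycleGraph_val
      have := hxc.cycleGraph_val
      omega
  · rintro rfl
    exact ⟨Or.inr ha, Or.inr hc⟩

theorem commonClosedNeighbors_cycleGraph_cases (hm : 5 ≤ m) {T : Set (Fin m)}
    (hT : T.Nonempty) :
    (cycleGraph m).commonClosedNeighbors T = ∅ ∨
      (∃ i, (cycleGraph m).commonClosedNeighbors T = {i}) ∨
      (∃ i j, (cycleGraph m).Adj i j ∧ (cycleGraph m).commonClosedNeighbors T = {i, j}) ∨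
      (∃ i j k, (cycleGraph m).Adj i j ∧ (cycleGraph m).Adj j k ∧ i ≠ k ∧
        (cycleGraph m).commonClosedNeighbors T = {i, j, k}) := by
  set B := (cycleGraph m).commonClosedNeighbors T
  obtain ⟨j, hj⟩ := hT
  obtain ⟨a, c, ha, hc, hac⟩ := cycleGraph_exists_adj_adj_ne (by omega) j
  have hsub : B ⊆ {a, j, c} := by
    rw [Set.insert_comm, ← cycleGraph_neighborSet_eq_pair ha hc hac,
      ← commonClosedNeighbors_singleton]
    exact commonClosedNeighbors_anti (Set.singleton_subset_iff.mpr hj)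
  have hmid (haB : a ∈ B) (hcB : c ∈ B) : j ∈ B := by
    intro t ht
    have ht' : t ∈ (cycleGraph m).commonClosedNeighbors {a, c} := by
      rintro x (rfl | rfl)
      exacts [(haB t ht).imp Eq.symm Adj.symm, (hcB t ht).imp Eq.symm Adj.symm]
    rw [commonClosedNeighbors_cycleGraph_pair_of_adj_of_adj hm ha hc hac] at ht'
    exact Or.inl ht'.symm
  rcases Set.subset_triple_cases hsub hmid with h | h | h | h | h | h | h
  · exact .inl h
  · exact .inr <| .inl ⟨a, h⟩
  · exact .inr <| .inl ⟨j, h⟩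
  · exact .inr <| .inl ⟨c, h⟩
  · exact .inr <| .inr <| .inl ⟨a, j, ha.symm, h⟩
  · exact .inr <| .inr <| .inl ⟨j, c, hc, h⟩
  · exact .inr <| .inr <| .inr ⟨a, j, c, ha.symm, hc, hac, h⟩

end Cycle

section Wheel

variable {m : ℕ}

theorem wheelGraph_adj_none {v : Option (Fin m)} (hv : v ≠ none) : (wheelGraph m).Adj none v := by
  cases v
  · contradiction
  · trivial

theorem commonClosedNeighbors_wheelGraph (S : Set (Option (Fin m))) :
    (wheelGraph m).commonClosedNeighbors S =
      some '' (cycleGraph m).commonClosedNeighbors (some ⁻¹' S) ∪ {none} := by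
  ext (_ | i)
  · simp only [Set.mem_union, Set.mem_singleton_iff, or_true, iff_true]
    intro x _
    rcases eq_or_ne x none with rfl | hx
    · exact Or.inl rfl
    · exact Or.inr (wheelGraph_adj_none hx)
  · simp [mem_commonClosedNeighbors, Option.forall, wheelGraph]

theorem sCenter_wheelGraph {S : Finset (Option (Fin m))} (hS : 1 < #S) :
    sCenter (wheelGraph m) S =
      some '' (cycleGraph m).commonClosedNeighbors (some ⁻¹' S) ∪ {none} := by
  rw [sCenter_eq_commonClosedNeighbors (fun _ => wheelGraph_adj_none) hS,
    commonClosedNeighbors_wheelGraph]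

theorem sCenter_wheelGraph_of_adj_of_adj (hm : 5 ≤ m) {i a c : Fin m}
    (ha : (cycleGraph m).Adj i a) (hc : (cycleGraph m).Adj i c) (hac : a ≠ c) :
    sCenter (wheelGraph m) {some a, some c} = {some i, none} := by
  rw [sCenter_wheelGraph (by simp [hac]),
    show some ⁻¹' _ = {a, c} from Set.ext fun _ => by simp,
    commonClosedNeighbors_cycleGraph_pair_of_adj_of_adj hm ha hc hac]
  simp only [Set.image_singleton, Set.singleton_union]

theorem sCenter_wheelGraph_of_adj (hm : 4 ≤ m) {i j : Fin m} (hij : (cycleGraph m).Adj i j) :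
    sCenter (wheelGraph m) {some i, some j} = {some i, some j, none} := by
  rw [sCenter_wheelGraph (by simp [hij.ne]),
    show some ⁻¹' _ = {i, j} from Set.ext fun _ => by simp,
    commonClosedNeighbors_cycleGraph_pair_of_adj hm hij]
  simp only [Set.image_insert_eq, Set.image_singleton, Set.insert_union, Set.singleton_union]

theorem sCenter_wheelGraph_some_none {i j k : Fin m} (hij : (cycleGraph m).Adj i j)
    (hjk : (cycleGraph m).Adj j k) (hik : i ≠ k) :
    sCenter (wheelGraph m) {some j, none} = {some i, some j, some k, none} := by
  rw [sCenter_wheelGraph (by simp), show some ⁻¹' _ = {j} from Set.ext fun _ => by simp,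
    commonClosedNeighbors_singleton, cycleGraph_neighborSet_eq_pair hij.symm hjk hik,
    Set.insert_comm j i]
  simp only [Set.image_insert_eq, Set.image_singleton, Set.insert_union, Set.singleton_union]

end Wheel

end SimpleGraph

/-- For the wheel `W_n`, `n ≥ 6`, with outer cycle `v_1, …, v_{n-1}` (here the vertices
`some i`) and hub `v_n` (here `none`), the center sets are exactly: the singletons; the
pairs `{v_i, v_n}`; the sets `{v_i, v_j, v_n}` with `v_i v_j` an outer-cycle edge; and
the sets `{v_i, v_j, v_k, v_n}` with `v_i v_j`, `v_j v_k` outer-cycle edges (`v_i ≠ v_k`). -/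
theorem centerSets_of_wheel (m : ℕ) (hm : 5 ≤ m) (A : Set (Option (Fin m))) :
    IsCenterSet (wheelGraph m) A ↔
      (∃ v : Option (Fin m), A = {v}) ∨
      (∃ i : Fin m, A = {some i, none}) ∨
      (∃ i j : Fin m, (SimpleGraph.cycleGraph m).Adj i j ∧ A = {some i, some j, none}) ∨
      (∃ i j k : Fin m, (SimpleGraph.cycleGraph m).Adj i j ∧
        (SimpleGraph.cycleGraph m).Adj j k ∧ i ≠ k ∧
        A = {some i, some j, some k, none}) := by
  have hW : (wheelGraph m).Connected := connected_of_forall_adj fun _ => wheelGraph_adj_none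
  constructor
  · rintro ⟨S, hS, rfl⟩
    obtain ⟨x, rfl⟩ | hS := hS.exists_eq_singleton_or_nontrivial
    · exact .inl ⟨x, sCenter_singleton hW x⟩
    rw [sCenter_wheelGraph (Finset.one_lt_card_iff_nontrivial.mpr hS)]
    rcases commonClosedNeighbors_cycleGraph_cases hm
        (Set.Nontrivial.preimage_some_nonempty hS) with
      h | ⟨i, h⟩ | ⟨i, j, hij, h⟩ | ⟨i, j, k, hij, hjk, hik, h⟩ <;>
      simp only [h, Set.image_empty, Set.empty_union, Set.image_insert_eq, Set.image_singleton,
        Set.insert_union, Set.singleton_union]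
    · exact .inl ⟨none, rfl⟩
    · exact .inr <| .inl ⟨i, rfl⟩
    · exact .inr <| .inr <| .inl ⟨i, j, hij, rfl⟩
    · exact .inr <| .inr <| .inr ⟨i, j, k, hij, hjk, hik, rfl⟩
  · rintro (⟨v, rfl⟩ | ⟨i, rfl⟩ | ⟨i, j, hij, rfl⟩ | ⟨i, j, k, hij, hjk, hik, rfl⟩)
    · exact ⟨{v}, by simp, sCenter_singleton hW v⟩
    · obtain ⟨a, c, ha, hc, hac⟩ := cycleGraph_exists_adj_adj_ne (by omega) i
      exact ⟨_, by simp, sCenter_wheelGraph_of_adj_of_adj hm ha hc hac⟩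
    · exact ⟨_, by simp, sCenter_wheelGraph_of_adj (by omega) hij⟩
    · exact ⟨_, by simp, sCenter_wheelGraph_some_none hij hjk hik⟩
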